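/- arXiv:1803.09259 — 10 statements merged into one kernel-verified Lean document; each statement's English description precedes it below -/
import Mathlib

section
/- Let f : ℂ → ℂ be an entire function such that |f(z) - 2| < 1/2 for all z ∈ E_0. Then there exists a point z_0 with |z_0 - 2| < 1/2 such that f(z_0) = z_0, |f'(z_0)| < 1 (so z_0 is an attracting fixed point of f), and for every z ∈ E_0 the sequence of iterates f^n(z) converges to z_0 as n → ∞. -/
open Complex Metric

noncomputable section

/-- `Gset k` is the set `G_k` for `k ≥ 1`. -/
def Gset (k : ℕ) : Set ℂ :=
  {z | ‖z - (4*(k:ℂ)+2)‖ ≤ 1} ∪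
  {z | z.re = 4*(k:ℝ)+2 ∧ 1 ≤ z.im} ∪
  {z | z.re = 4*(k:ℝ)+2 ∧ z.im ≤ -1}

/-- `Bset k` is the set `B_k` for `k ≥ 1`. -/
def Bset (k : ℕ) : Set ℂ :=
  {z | ‖z + (4*(k:ℂ)+2)‖ ≤ 1} ∪
  {z | z.re = -(4*(k:ℝ)+2) ∧ 1 ≤ z.im} ∪
  {z | z.re = -(4*(k:ℝ)+2) ∧ z.im ≤ -1}

/-- `Lset k` is the vertical line `Re z = 4k`. -/
def Lset (k : ℕ) : Set ℂ := {z | z.re = 4*(k:ℝ)}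

/-- `Mset k` is the vertical line `Re z = -4k`. -/
def Mset (k : ℕ) : Set ℂ := {z | z.re = -(4*(k:ℝ))}

/-- `G0` is the closed disk `|z - 2| ≤ 1`. -/
def G0 : Set ℂ := {z | ‖z - 2‖ ≤ 1}

/-- `E0 = G_0 ∪ ⋃_{k ≥ 1} (L_k ∪ M_k)`. -/
def E0 : Set ℂ := G0 ∪ ⋃ k ∈ Set.Ici 1, (Lset k ∪ Mset k)

/-- Condition (F). -/
def CondF (f : ℂ → ℂ) : Prop :=
  (∀ z ∈ E0, ‖f z - 2‖ < 1/2) ∧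
  (∀ k : ℕ, 1 ≤ k → ∀ z ∈ Gset k, ‖f z + 6‖ < 1/2) ∧
  (∀ k : ℕ, 1 ≤ k → ∀ z ∈ Bset k, ‖f z + (4*(k:ℂ)+6)‖ < 1/2)

/-- Condition (G). -/
def CondG (g : ℂ → ℂ) : Prop :=
  (∀ z ∈ E0, ‖g z - 2‖ < 1/2) ∧
  (∀ z ∈ Gset 1, ‖g z + 6‖ < 1/2) ∧
  (∀ k : ℕ, 2 ≤ k → ∀ z ∈ Gset k, ‖g z - (4*(k:ℂ)-2)‖ < 1/2) ∧
  (∀ k : ℕ, 1 ≤ k → ∀ z ∈ Bset k, ‖g z + (4*(k:ℂ)+6)‖ < 1/2)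

/-- Condition (H). -/
def CondH (h : ℂ → ℂ) : Prop :=
  (∀ z ∈ E0, ‖h z - 2‖ < 1/2) ∧
  (∀ z ∈ Gset 1, ‖h z + 10‖ < 1/2) ∧
  (∀ z ∈ Gset 2, ‖h z + 6‖ < 1/2) ∧
  (∀ k : ℕ, 3 ≤ k → ∀ z ∈ Gset k, ‖h z - (4*(k:ℂ)-6)‖ < 1/2) ∧
  (∀ k : ℕ, 1 ≤ k → ∀ z ∈ Bset k, ‖h z + (4*(k:ℂ)+6)‖ < 1/2)

/-!
On the compact disc `|z - 2| ≤ 1 ⊆ E₀` the continuous function `|f - 2|` attains a maximum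
`M < 1/2`, so `f` maps this disc into `|z - 2| ≤ M`. Cauchy's estimate bounds `|f'|` by
`M / (1 - M) < 1` on the smaller disc, which `f` maps into itself, and Banach's fixed point theorem
gives the attracting fixed point. Every point of `E₀` lands in `|z - 2| < 1/2` after one step, hence
lies in its basin.
-/

open Filter Function Topology Set

theorem tendsto_iterate_of_tendsto_iterate_apply {α : Type*} {f : α → α} {x : α} {l : Filter α}
    (h : Tendsto (fun n ↦ f^[n] (f x)) atTop l) : Tendsto (fun n ↦ f^[n] x) atTop l :=
  (tendsto_add_atTop_iff_nat 1).mp <| by simpa only [iterate_succ_apply] using h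

theorem LipschitzOnWith.exists_isFixedPt_tendsto_iterate {α : Type*} [MetricSpace α]
    {f : α → α} {s : Set α} {K : NNReal} (hf : LipschitzOnWith K f s) (hK : K < 1)
    (hfs : MapsTo f s s) (hs : IsComplete s) (hne : s.Nonempty) :
    ∃ y ∈ s, IsFixedPt f y ∧ ∀ x ∈ s, Tendsto (fun n ↦ f^[n] x) atTop (𝓝 y) := by
  have := hs.completeSpace_coe
  have := hne.to_subtype
  have hg : ContractingWith K (hfs.restrict f s s) := ⟨hK, hfs.lipschitzOnWith_iff_restrict.mp hf⟩
  set y := ContractingWith.fixedPoint _ hg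
  refine ⟨y, y.2, congrArg Subtype.val (ContractingWith.fixedPoint_isFixedPt hg), fun x hx ↦ ?_⟩
  convert (continuous_subtype_val.tendsto _).comp (hg.tendsto_iterate_fixedPoint ⟨x, hx⟩) using 2
  simp only [comp_apply, MapsTo.iterate_restrict, MapsTo.val_restrict_apply]

theorem Complex.norm_deriv_le_of_mapsTo_closedBall {E : Type*} [NormedAddCommGroup E]
    [NormedSpace ℂ E] {f : ℂ → E} {c z : ℂ} {a : E} {R r M : ℝ}
    (hf : DifferentiableOn ℂ f (closedBall c R)) (hmaps : MapsTo f (closedBall c R) (closedBall a M))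
    (hr : 0 < r) (hz : z ∈ closedBall c (R - r)) : ‖deriv f z‖ ≤ M / r := by
  have hsub : closedBall z r ⊆ closedBall c R :=
    closedBall_subset_closedBall' (by linarith [mem_closedBall.mp hz])
  rw [← deriv_sub_const a]
  refine norm_deriv_le_of_forall_mem_sphere_norm_le hr ((hf.sub_const a).diffContOnCl_ball hsub)
    fun w hw ↦ ?_
  simpa [← dist_eq_norm] using hmaps (hsub (sphere_subset_closedBall hw))

/-- By Cauchy's estimate `f` contracts `closedBall c m` with factor `m / (R - m) < 1`. -/
theorem Complex.exists_isFixedPt_tendsto_iterate_of_mapsTo_closedBall {f : ℂ → ℂ} {c : ℂ}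
    {R m : ℝ} (hf : DifferentiableOn ℂ f (closedBall c R))
    (hmaps : MapsTo f (closedBall c R) (closedBall c m)) (hm : 0 ≤ m) (hmR : 2 * m < R) :
    ∃ y ∈ closedBall c m, IsFixedPt f y ∧ ‖deriv f y‖ < 1 ∧
      ∀ x ∈ closedBall c R, Tendsto (fun n ↦ f^[n] x) atTop (𝓝 y) := by
  set K : NNReal := ⟨m / (R - m), div_nonneg hm (by linarith)⟩
  have hK : K < 1 := NNReal.coe_lt_coe.mp <| (div_lt_one (by linarith)).mpr (by linarith)
  have hderiv : ∀ z ∈ closedBall c m, ‖deriv f z‖ ≤ K := fun z hz ↦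
    norm_deriv_le_of_mapsTo_closedBall hf hmaps (by linarith) (by simpa using hz)
  have hsub : closedBall c m ⊆ closedBall c R := closedBall_subset_closedBall (by linarith)
  have hlip : LipschitzOnWith K f (closedBall c m) :=
    (convex_closedBall c m).lipschitzOnWith_of_nnnorm_deriv_le
      (fun z hz ↦ hf.differentiableAt (closedBall_mem_nhds_of_mem
        (mem_closedBall.mp hz |>.trans_lt (by linarith))))
      hderiv
  obtain ⟨y, hy, hfix, htends⟩ := hlip.exists_isFixedPt_tendsto_iterate hK
    (hmaps.mono_left hsub) isClosed_closedBall.isComplete (nonempty_closedBall.mpr hm)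
  exact ⟨y, hy, hfix, (hderiv y hy).trans_lt hK,
    fun x hx ↦ tendsto_iterate_of_tendsto_iterate_apply (htends (f x) (hmaps hx))⟩

theorem attracting_fixed_point_of_contraction_on_E0 (f : ℂ → ℂ)
    (hf : Differentiable ℂ f)
    (hE : ∀ z ∈ E0, ‖f z - 2‖ < 1/2) :
    ∃ z₀ : ℂ, ‖z₀ - 2‖ < 1/2 ∧ f z₀ = z₀ ∧
      ‖deriv f z₀‖ < 1 ∧
      ∀ z ∈ E0, Filter.Tendsto (fun n : ℕ => f^[n] z) Filter.atTop (nhds z₀) := by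
  have hG0 : closedBall (2 : ℂ) 1 ⊆ E0 := fun z hz ↦ Or.inl (mem_closedBall_iff_norm.mp hz)
  obtain ⟨x₀, hx₀, hmax⟩ := (isCompact_closedBall (2 : ℂ) 1).exists_isMaxOn
    (nonempty_closedBall.mpr zero_le_one) (hf.continuous.sub continuous_const).norm.continuousOn
  set M := ‖f x₀ - 2‖
  have hM : M < 1 / 2 := hE x₀ (hG0 hx₀)
  have hmaps : MapsTo f (closedBall 2 1) (closedBall 2 M) :=
    fun z hz ↦ mem_closedBall_iff_norm.mpr (hmax hz)
  obtain ⟨y, hy, hfix, hderiv, htends⟩ :=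
    Complex.exists_isFixedPt_tendsto_iterate_of_mapsTo_closedBall hf.differentiableOn hmaps
      (norm_nonneg _) (by linarith)
  refine ⟨y, (mem_closedBall_iff_norm.mp hy).trans_lt hM, hfix, hderiv, fun z hz ↦ ?_⟩
  have hfz : f z ∈ closedBall 2 1 := mem_closedBall_iff_norm.mpr (by linarith [hE z hz])
  exact tendsto_iterate_of_tendsto_iterate_apply (htends (f z) hfz)
end
end

section
/- Let f : ℂ → ℂ be an entire function satisfying condition (F). Then for all integers k >= 1 and n >= 1: f^n(G_k) ⊆ D(-(4n+2), 1/2) and f^n(B_k) ⊆ D(-(4(k+n)+2), 1/2). In particular, for each k >= 1 the images f^n(G_k), n >= 1, lie in pairwise disjoint disks, and likewise the images f^n(B_k), n >= 1, lie in pairwise disjoint disks. -/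
open Complex Metric

noncomputable section

lemma ball_sub_Bset (m : ℕ) : ball (-(4*(m:ℂ)+2)) (1/2) ⊆ Bset m := by
  intro z hz
  left; left
  simp only [Set.mem_setOf_eq]
  rw [mem_ball, Complex.dist_eq] at hz
  have e : z - (-(4*(m:ℂ)+2)) = z + (4*(m:ℂ)+2) := by ring
  rw [e] at hz
  linarith

lemma step (f : ℂ → ℂ)
    (hF : (∀ k : ℕ, 1 ≤ k → ∀ z ∈ Gset k, ‖f z + 6‖ < 1/2) ∧
      (∀ k : ℕ, 1 ≤ k → ∀ z ∈ Bset k, ‖f z + (4*(k:ℂ)+6)‖ < 1/2))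
    (m : ℕ) (hm : 1 ≤ m) :
    f '' ball (-(4*(m:ℂ)+2)) (1/2) ⊆ ball (-(4*((m:ℂ)+1)+2)) (1/2) := by
  rintro _ ⟨z, hz, rfl⟩
  have := hF.2 m hm z (ball_sub_Bset m hz)
  rw [mem_ball, Complex.dist_eq]
  have e : f z - (-(4*((m:ℂ)+1)+2)) = f z + (4*(m:ℂ)+6) := by ring
  rw [e]; exact this

lemma disjballs (m n : ℕ) (h : m ≠ n) :
    Disjoint (ball (-(4*(m:ℂ)+2)) (1/2)) (ball (-(4*(n:ℂ)+2)) (1/2)) := by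
  apply ball_disjoint_ball
  rw [Complex.dist_eq]
  have e : (-(4*(m:ℂ)+2)) - (-(4*(n:ℂ)+2)) = ((4*((n:ℝ)-(m:ℝ)) : ℝ) : ℂ) := by
    push_cast; ring
  rw [e, Complex.norm_real, Real.norm_eq_abs]
  have h1 : (1:ℝ) ≤ |(n:ℝ)-(m:ℝ)| := by
    rcases lt_or_gt_of_ne h with hlt | hlt
    · have : (m:ℝ)+1 ≤ n := by exact_mod_cast hlt
      rw [_root_.abs_of_nonneg (by linarith)]; linarith
    · have : (n:ℝ)+1 ≤ m := by exact_mod_cast hlt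
      rw [_root_.abs_of_nonpos (by linarith)]; linarith
  rw [_root_.abs_mul]
  have : |(4:ℝ)| = 4 := by norm_num
  rw [this]; linarith

lemma iterG (f : ℂ → ℂ) (hF : CondF f) (k : ℕ) (hk : 1 ≤ k) :
    ∀ n : ℕ, 1 ≤ n → f^[n] '' Gset k ⊆ ball (-(4*(n:ℂ)+2)) (1/2) := by
  intro n
  induction n with
  | zero => omega
  | succ n ih =>
    intro _
    rcases Nat.eq_zero_or_pos n with rfl | hn
    · rintro _ ⟨z, hz, rfl⟩
      rw [Function.iterate_succ_apply', Function.iterate_zero_apply]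
      have := hF.2.1 k hk z hz
      rw [mem_ball, Complex.dist_eq]
      have e : f z - (-(4*((1:ℕ):ℂ)+2)) = f z + 6 := by push_cast; ring
      rw [e]; exact this
    · have h1 : f^[n+1] '' Gset k = f '' (f^[n] '' Gset k) := by
        rw [Function.iterate_succ', Set.image_comp]
      rw [h1]
      have h2 := Set.image_mono (f := f) (ih hn)
      refine h2.trans ?_
      have h3 := step f ⟨hF.2.1, hF.2.2⟩ n hn
      refine h3.trans ?_
      have e : (-(4*((n:ℂ)+1)+2)) = (-(4*((↑(n+1)):ℂ)+2)) := by push_cast; ring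
      rw [e]

lemma iterB (f : ℂ → ℂ) (hF : CondF f) (k : ℕ) (hk : 1 ≤ k) :
    ∀ n : ℕ, 1 ≤ n → f^[n] '' Bset k ⊆ ball (-(4*((↑(k+n)):ℂ)+2)) (1/2) := by
  intro n
  induction n with
  | zero => omega
  | succ n ih =>
    intro _
    rcases Nat.eq_zero_or_pos n with rfl | hn
    · rintro _ ⟨z, hz, rfl⟩
      rw [Function.iterate_succ_apply', Function.iterate_zero_apply]
      have := hF.2.2 k hk z hz
      rw [mem_ball, Complex.dist_eq]
      have e : f z - (-(4*((↑(k+1)):ℂ)+2)) = f z + (4*(k:ℂ)+6) := by push_cast; ring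
      rw [e]; exact this
    · have h1 : f^[n+1] '' Bset k = f '' (f^[n] '' Bset k) := by
        rw [Function.iterate_succ', Set.image_comp]
      rw [h1]
      refine (Set.image_mono (f := f) (ih hn)).trans ?_
      have h3 := step f ⟨hF.2.1, hF.2.2⟩ (k+n) (by omega)
      refine h3.trans ?_
      have e : (-(4*((↑(k+n)):ℂ)+1*4+2)) = (-(4*((↑(k+(n+1))):ℂ)+2)) := by push_cast; ring
      have e' : (-(4*(((↑(k+n)):ℂ)+1)+2)) = (-(4*((↑(k+(n+1))):ℂ)+2)) := by push_cast; ring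
      rw [e']

theorem iterates_of_condF_wander (f : ℂ → ℂ) (hf : Differentiable ℂ f)
    (hF : CondF f) :
    (∀ k n : ℕ, 1 ≤ k → 1 ≤ n →
      f^[n] '' Gset k ⊆ ball (-(4*(n:ℂ)+2)) (1/2) ∧
      f^[n] '' Bset k ⊆ ball (-(4*((k:ℂ)+(n:ℂ))+2)) (1/2)) ∧

    (∀ k : ℕ, 1 ≤ k →
      (∃ D : ℕ → Set ℂ,
        (∀ n : ℕ, 1 ≤ n → ∃ a : ℂ, ∃ r : ℝ, 0 < r ∧ D n = ball a r) ∧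
        (∀ m n : ℕ, 1 ≤ m → 1 ≤ n → m ≠ n → Disjoint (D m) (D n)) ∧
        (∀ n : ℕ, 1 ≤ n → f^[n] '' Gset k ⊆ D n)) ∧
      (∃ D : ℕ → Set ℂ,
        (∀ n : ℕ, 1 ≤ n → ∃ a : ℂ, ∃ r : ℝ, 0 < r ∧ D n = ball a r) ∧
        (∀ m n : ℕ, 1 ≤ m → 1 ≤ n → m ≠ n → Disjoint (D m) (D n)) ∧
        (∀ n : ℕ, 1 ≤ n → f^[n] '' Bset k ⊆ D n))) := by
  constructor
  · intro k n hk hn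
    constructor
    · exact iterG f hF k hk n hn
    · have := iterB f hF k hk n hn
      have e : (-(4*((↑(k+n)):ℂ)+2)) = (-(4*((k:ℂ)+(n:ℂ))+2)) := by push_cast; ring
      rwa [e] at this
  · intro k hk
    constructor
    · refine ⟨fun n => ball (-(4*(n:ℂ)+2)) (1/2), ?_, ?_, ?_⟩
      · intro n _; exact ⟨_, _, by norm_num, rfl⟩
      · intro m n _ _ hmn; exact disjballs m n hmn
      · intro n hn; exact iterG f hF k hk n hn
    · refine ⟨fun n => ball (-(4*((↑(k+n)):ℂ)+2)) (1/2), ?_, ?_, ?_⟩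
      · intro n _; exact ⟨_, _, by norm_num, rfl⟩
      · intro m n _ _ hmn; exact disjballs (k+m) (k+n) (by omega)
      · intro n hn; exact iterB f hF k hk n hn
end
end

section
/- Let g : ℂ → ℂ be an entire function satisfying condition (G). Then for all integers k >= 1 and n >= 1: (i) if 1 <= n <= k-1 then g^n(G_k) ⊆ D(4(k-n)+2, 1/2); (ii) if n >= k then g^n(G_k) ⊆ D(-(4(n-k+1)+2), 1/2); (iii) g^n(B_k) ⊆ D(-(4(k+n)+2), 1/2). In particular, for each k >= 1 the images g^n(G_k), n >= 1, lie in pairwise disjoint disks. -/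
open Complex Metric

noncomputable section

theorem iterates_of_condG_wander (g : ℂ → ℂ) (hg : Differentiable ℂ g)
    (hG : CondG g) :
    (∀ k n : ℕ, 1 ≤ k → 1 ≤ n →
      (n ≤ k - 1 → g^[n] '' Gset k ⊆ ball (4*((k:ℂ)-(n:ℂ))+2) (1/2)) ∧
      (k ≤ n → g^[n] '' Gset k ⊆ ball (-(4*((n:ℂ)-(k:ℂ)+1)+2)) (1/2)) ∧
      g^[n] '' Bset k ⊆ ball (-(4*((k:ℂ)+(n:ℂ))+2)) (1/2)) ∧

    (∀ k : ℕ, 1 ≤ k →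
      ∃ D : ℕ → Set ℂ,
        (∀ n : ℕ, 1 ≤ n → ∃ a : ℂ, ∃ r : ℝ, 0 < r ∧ D n = ball a r) ∧
        (∀ m n : ℕ, 1 ≤ m → 1 ≤ n → m ≠ n → Disjoint (D m) (D n)) ∧
        (∀ n : ℕ, 1 ≤ n → g^[n] '' Gset k ⊆ D n)) := by
  obtain ⟨hE, hG1, hGk, hBk⟩ := hG
  have hGin : ∀ (m : ℕ) (w : ℂ), w ∈ ball (4*(m:ℂ)+2) (1/2) → w ∈ Gset m := by
    intro m w hw
    rw [mem_ball, Complex.dist_eq] at hw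
    left; left
    simp only [Set.mem_setOf_eq]
    linarith
  have hBin : ∀ (m : ℕ) (w : ℂ), w ∈ ball (-(4*(m:ℂ)+2)) (1/2) → w ∈ Bset m := by
    intro m w hw
    rw [mem_ball, Complex.dist_eq, sub_neg_eq_add] at hw
    left; left
    simp only [Set.mem_setOf_eq]
    linarith
  have main : ∀ n, 1 ≤ n → ∀ k, 1 ≤ k →
      (n < k → ∀ x ∈ Gset k, g^[n] x ∈ ball (4*((k:ℂ)-(n:ℂ))+2) (1/2)) ∧
      (k ≤ n → ∀ x ∈ Gset k, g^[n] x ∈ ball (-(4*((n:ℂ)-(k:ℂ)+1)+2)) (1/2)) ∧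
      (∀ x ∈ Bset k, g^[n] x ∈ ball (-(4*((k:ℂ)+(n:ℂ))+2)) (1/2)) := by
    intro n hn
    induction n, hn using Nat.le_induction with
    | base =>
      intro k hk
      refine ⟨?_, ?_, ?_⟩
      · intro hk2 x hx
        have h2 := hGk k hk2 x hx
        rw [Function.iterate_one, mem_ball, Complex.dist_eq]
        have e : 4*((k:ℂ)-(1:ℕ))+2 = 4*(k:ℂ)-2 := by push_cast; ring
        rw [e]; exact h2
      · intro hk1 x hx
        have hk1' : k = 1 := le_antisymm hk1 hk
        subst hk1'
        have h2 := hG1 x hx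
        rw [Function.iterate_one, mem_ball, Complex.dist_eq]
        have e : (-(4*(((1:ℕ):ℂ)-((1:ℕ):ℂ)+1)+2)) = -6 := by push_cast; ring
        rw [e, sub_neg_eq_add]; exact h2
      · intro x hx
        have h2 := hBk k hk x hx
        rw [Function.iterate_one, mem_ball, Complex.dist_eq]
        have e : (-(4*((k:ℂ)+((1:ℕ):ℂ))+2)) = -(4*(k:ℂ)+6) := by push_cast; ring
        rw [e, sub_neg_eq_add]; exact h2
    | succ n hn ih =>
      intro k hk
      refine ⟨?_, ?_, ?_⟩
      · intro hlt x hx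
        have hnk : n < k := by omega
        have h1 := (ih k hk).1 hnk x hx
        have hcast : ((k - n : ℕ) : ℂ) = (k:ℂ) - (n:ℂ) := Nat.cast_sub hnk.le
        have hmem : g^[n] x ∈ Gset (k - n) := by
          apply hGin
          rw [show (4*((k-n:ℕ):ℂ)+2) = 4*((k:ℂ)-(n:ℂ))+2 by rw [hcast]]
          exact h1
        have h2 := hGk (k - n) (by omega) _ hmem
        rw [Function.iterate_succ_apply', mem_ball, Complex.dist_eq]
        have e : 4*((k:ℂ)-((n+1:ℕ):ℂ))+2 = 4*((k-n:ℕ):ℂ)-2 := by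
          rw [hcast]; push_cast; ring
        rw [e]; exact h2
      · intro hle x hx
        by_cases hkn : k ≤ n
        · have h1 := (ih k hk).2.1 hkn x hx
          have hcast : ((n - k + 1 : ℕ) : ℂ) = (n:ℂ) - (k:ℂ) + 1 := by
            push_cast [Nat.cast_sub hkn]; ring
          have hmem : g^[n] x ∈ Bset (n - k + 1) := by
            apply hBin
            rw [show (-(4*((n-k+1:ℕ):ℂ)+2)) = -(4*((n:ℂ)-(k:ℂ)+1)+2) by rw [hcast]]
            exact h1
          have h2 := hBk (n - k + 1) (by omega) _ hmem
          rw [Function.iterate_succ_apply', mem_ball, Complex.dist_eq]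
          have e : (-(4*(((n+1:ℕ):ℂ)-(k:ℂ)+1)+2)) = -(4*((n-k+1:ℕ):ℂ)+6) := by
            rw [hcast]; push_cast; ring
          rw [e, sub_neg_eq_add]; exact h2
        · have hk' : k = n + 1 := by omega
          have h1 := (ih k hk).1 (by omega) x hx
          have hmem : g^[n] x ∈ Gset 1 := by
            apply hGin
            rw [show (4*((1:ℕ):ℂ)+2) = 4*((k:ℂ)-(n:ℂ))+2 by subst hk'; push_cast; ring]
            exact h1
          have h2 := hG1 _ hmem
          rw [Function.iterate_succ_apply', mem_ball, Complex.dist_eq]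
          have e : (-(4*(((n+1:ℕ):ℂ)-(k:ℂ)+1)+2)) = -6 := by
            subst hk'; push_cast; ring
          rw [e, sub_neg_eq_add]; exact h2
      · intro x hx
        have h1 := (ih k hk).2.2 x hx
        have hmem : g^[n] x ∈ Bset (k + n) := by
          apply hBin
          rw [show (-(4*((k+n:ℕ):ℂ)+2)) = -(4*((k:ℂ)+(n:ℂ))+2) by push_cast; ring]
          exact h1
        have h2 := hBk (k + n) (by omega) _ hmem
        rw [Function.iterate_succ_apply', mem_ball, Complex.dist_eq]
        have e : (-(4*((k:ℂ)+((n+1:ℕ):ℂ))+2)) = -(4*((k+n:ℕ):ℂ)+6) := by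
          push_cast; ring
        rw [e, sub_neg_eq_add]; exact h2
  constructor
  · intro k n hk hn
    obtain ⟨A, B, C⟩ := main n hn k hk
    refine ⟨?_, ?_, ?_⟩
    · intro h
      rintro y ⟨x, hx, rfl⟩
      exact A (by omega) x hx
    · intro h
      rintro y ⟨x, hx, rfl⟩
      exact B h x hx
    · rintro y ⟨x, hx, rfl⟩
      exact C x hx
  · intro k hk
    set f : ℕ → ℝ := fun t => if t < k then 4*((k:ℝ)-t)+2 else -(4*((t:ℝ)-k+1)+2) with hf
    refine ⟨fun n => ball ((f n : ℝ) : ℂ) (1/2), ?_, ?_, ?_⟩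
    · intro n hn
      exact ⟨_, 1/2, by norm_num, rfl⟩
    · have key : ∀ s t : ℕ, s < t → 1 ≤ |f s - f t| := by
        intro s t hst
        have hst' : (s:ℝ) + 1 ≤ t := by exact_mod_cast hst
        rcases lt_or_ge s k with hs | hs
        · rcases lt_or_ge t k with ht | ht
          · simp only [hf, if_pos hs, if_pos ht]
            rw [show (4*((k:ℝ)-s)+2) - (4*((k:ℝ)-t)+2) = 4*((t:ℝ)-s) by ring,
              _root_.abs_of_nonneg (by linarith)]
            linarith
          · have h2 : (k:ℝ) ≤ t := by exact_mod_cast ht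
            have h1 : (s:ℝ)+1 ≤ k := by exact_mod_cast hs
            simp only [hf, if_pos hs, if_neg (not_lt.mpr ht)]
            rw [_root_.abs_of_nonneg (by linarith)]
            linarith
        · have hs2 : (k:ℝ) ≤ s := by exact_mod_cast hs
          have ht : ¬ t < k := by omega
          simp only [hf, if_neg (not_lt.mpr hs), if_neg ht]
          rw [show (-(4*((s:ℝ)-k+1)+2)) - (-(4*((t:ℝ)-k+1)+2)) = 4*((t:ℝ)-s) by ring,
            _root_.abs_of_nonneg (by linarith)]
          linarith
      intro m n hm hn hmn
      apply ball_disjoint_ball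
      rw [Complex.dist_eq, show ((f m : ℝ):ℂ) - ((f n : ℝ):ℂ) = ((f m - f n : ℝ):ℂ) by push_cast; ring,
        Complex.norm_real, Real.norm_eq_abs]
      have : 1 ≤ |f m - f n| := by
        rcases hmn.lt_or_gt with h | h
        · exact key m n h
        · rw [abs_sub_comm]; exact key n m h
      linarith
    · intro n hn
      rintro y ⟨x, hx, rfl⟩
      obtain ⟨A, B, C⟩ := main n hn k hk
      by_cases h : n < k
      · have := A h x hx
        rw [mem_ball, Complex.dist_eq] at this ⊢
        rw [show ((f n : ℝ):ℂ) = 4*((k:ℂ)-(n:ℂ))+2 by simp only [hf, if_pos h]; push_cast; ring]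
        exact this
      · have := B (by omega) x hx
        rw [mem_ball, Complex.dist_eq] at this ⊢
        rw [show ((f n : ℝ):ℂ) = -(4*((n:ℂ)-(k:ℂ)+1)+2) by simp only [hf, if_neg h]; push_cast; ring]
        exact this
end
end

section
/- Let f and g be entire functions satisfying conditions (F) and (G) respectively. Then the composite g∘f satisfies: |(g∘f)(z) - 2| < 1/2 for all z ∈ E_0; |(g∘f)(z) + 10| < 1/2 for all z ∈ G_k for every k >= 1; and |(g∘f)(z) + (4k+10)| < 1/2 for all z ∈ B_k for every k >= 1. -/
open Complex Metric

noncomputable section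

theorem comp_gf (f g : ℂ → ℂ) (hf : Differentiable ℂ f) (hg : Differentiable ℂ g)
    (hF : CondF f) (hG : CondG g) :
    (∀ z ∈ E0, ‖(g ∘ f) z - 2‖ < 1/2) ∧
    (∀ k : ℕ, 1 ≤ k → ∀ z ∈ Gset k, ‖(g ∘ f) z + 10‖ < 1/2) ∧
    (∀ k : ℕ, 1 ≤ k → ∀ z ∈ Bset k, ‖(g ∘ f) z + (4*(k:ℂ)+10)‖ < 1/2) := by
  refine ⟨?_, ?_, ?_⟩
  · intro z hz
    have h1 : ‖f z - 2‖ < 1/2 := hF.1 z hz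
    have h2 : f z ∈ E0 := Or.inl (by simpa [G0, Set.mem_setOf_eq] using h1.le.trans (by norm_num))
    exact hG.1 (f z) h2
  · intro k hk z hz
    have h1 : ‖f z + 6‖ < 1/2 := hF.2.1 k hk z hz
    have key : ‖f z + (4*((1:ℕ):ℂ)+2)‖ ≤ 1 := by
      have e : (4*((1:ℕ):ℂ)+2) = 6 := by norm_num
      rw [e]; exact h1.le.trans (by norm_num)
    have h2 : f z ∈ Bset 1 := Or.inl (Or.inl key)
    have := hG.2.2.2 1 le_rfl (f z) h2
    have e : (4*((1:ℕ):ℂ)+6) = 10 := by norm_num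
    rw [e] at this
    simpa using this
  · intro k hk z hz
    have h1 : ‖f z + (4*(k:ℂ)+6)‖ < 1/2 := hF.2.2 k hk z hz
    have key : ‖f z + (4*((k+1:ℕ):ℂ)+2)‖ ≤ 1 := by
      have e : (4*((k+1:ℕ):ℂ)+2) = 4*(k:ℂ)+6 := by push_cast; ring
      rw [e]; exact h1.le.trans (by norm_num)
    have h2 : f z ∈ Bset (k+1) := Or.inl (Or.inl key)
    have := hG.2.2.2 (k+1) (by omega) (f z) h2
    have e : (4*((k+1:ℕ):ℂ)+6) = 4*(k:ℂ)+10 := by push_cast; ring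
    rw [e] at this
    simpa using this
end
end

section
/- Let f and h be entire functions satisfying conditions (F) and (H) respectively. Then the composite f∘h satisfies: |(f∘h)(z) - 2| < 1/2 for all z ∈ E_0; |(f∘h)(z) + 14| < 1/2 for all z ∈ G_1; |(f∘h)(z) + 10| < 1/2 for all z ∈ G_2; |(f∘h)(z) + 6| < 1/2 for all z ∈ G_k for every k >= 3; and |(f∘h)(z) + (4k+10)| < 1/2 for all z ∈ B_k for every k >= 1. -/
open Complex Metric

noncomputable section

theorem comp_fh (f h : ℂ → ℂ) (hf : Differentiable ℂ f) (hh : Differentiable ℂ h)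
    (hF : CondF f) (hH : CondH h) :
    (∀ z ∈ E0, ‖(f ∘ h) z - 2‖ < 1/2) ∧
    (∀ z ∈ Gset 1, ‖(f ∘ h) z + 14‖ < 1/2) ∧
    (∀ z ∈ Gset 2, ‖(f ∘ h) z + 10‖ < 1/2) ∧
    (∀ k : ℕ, 3 ≤ k → ∀ z ∈ Gset k, ‖(f ∘ h) z + 6‖ < 1/2) ∧
    (∀ k : ℕ, 1 ≤ k → ∀ z ∈ Bset k, ‖(f ∘ h) z + (4*(k:ℂ)+10)‖ < 1/2) := by
  obtain ⟨hF0, hFG, hFB⟩ := hF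
  obtain ⟨hH0, hH1, hH2, hHk, hHB⟩ := hH
  refine ⟨?_, ?_, ?_, ?_, ?_⟩
  · intro z hz
    have h1 := hH0 z hz
    have hmem : h z ∈ E0 := by
      left
      simp only [G0, Set.mem_setOf_eq]
      linarith [h1]
    exact hF0 _ hmem
  · intro z hz
    have h1 := hH1 z hz
    have hmem : h z ∈ Bset 2 := by
      left; left
      simp only [Set.mem_setOf_eq]
      have : h z + (4*(2:ℕ)+2 : ℂ) = h z + 10 := by push_cast; ring
      rw [this]; linarith
    have := hFB 2 (by norm_num) _ hmem
    have e : f (h z) + (4*(2:ℕ)+6 : ℂ) = (f ∘ h) z + 14 := by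
      simp [Function.comp]; push_cast; ring
    rw [e] at this; exact this
  · intro z hz
    have h1 := hH2 z hz
    have hmem : h z ∈ Bset 1 := by
      left; left
      simp only [Set.mem_setOf_eq]
      have : h z + (4*(1:ℕ)+2 : ℂ) = h z + 6 := by push_cast; ring
      rw [this]; linarith
    have := hFB 1 (by norm_num) _ hmem
    have e : f (h z) + (4*(1:ℕ)+6 : ℂ) = (f ∘ h) z + 10 := by
      simp [Function.comp]; push_cast; ring
    rw [e] at this; exact this
  · intro k hk z hz
    have h1 := hHk k hk z hz
    have hmem : h z ∈ Gset (k - 2) := by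
      left; left
      simp only [Set.mem_setOf_eq]
      have e : h z - (4*((k-2:ℕ):ℂ)+2) = h z - (4*(k:ℂ)-6) := by
        have : ((k-2:ℕ):ℂ) = (k:ℂ) - 2 := by
          push_cast [Nat.cast_sub (by omega : 2 ≤ k)]; ring
        rw [this]; ring
      rw [e]; linarith
    exact hFG (k-2) (by omega) _ hmem
  · intro k hk z hz
    have h1 := hHB k hk z hz
    have hmem : h z ∈ Bset (k + 1) := by
      left; left
      simp only [Set.mem_setOf_eq]
      have e : h z + (4*((k+1:ℕ):ℂ)+2) = h z + (4*(k:ℂ)+6) := by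
        push_cast; ring
      rw [e]; linarith
    have := hFB (k+1) (by omega) _ hmem
    have e : f (h z) + (4*((k+1:ℕ):ℂ)+6) = (f ∘ h) z + (4*(k:ℂ)+10) := by
      simp [Function.comp]; push_cast; ring
    rw [e] at this; exact this
end
end

section
/- Let f and h be entire functions satisfying conditions (F) and (H) respectively. Then the composite h∘f satisfies: |(h∘f)(z) - 2| < 1/2 for all z ∈ E_0; |(h∘f)(z) + 10| < 1/2 for all z ∈ G_k for every k >= 1; and |(h∘f)(z) + (4k+10)| < 1/2 for all z ∈ B_k for every k >= 1. -/
open Complex Metric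

noncomputable section

theorem comp_hf (f h : ℂ → ℂ) (hf : Differentiable ℂ f) (hh : Differentiable ℂ h)
    (hF : CondF f) (hH : CondH h) :
    (∀ z ∈ E0, ‖(h ∘ f) z - 2‖ < 1/2) ∧
    (∀ k : ℕ, 1 ≤ k → ∀ z ∈ Gset k, ‖(h ∘ f) z + 10‖ < 1/2) ∧
    (∀ k : ℕ, 1 ≤ k → ∀ z ∈ Bset k, ‖(h ∘ f) z + (4*(k:ℂ)+10)‖ < 1/2) := by
  obtain ⟨hF1, hF2, hF3⟩ := hF
  obtain ⟨hH1, hH2, hH3, hH4, hH5⟩ := hH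
  refine ⟨?_, ?_, ?_⟩
  · intro z hz
    have h1 : f z ∈ E0 := by
      left
      simp only [G0, Set.mem_setOf_eq]
      exact le_of_lt (lt_of_lt_of_le (hF1 z hz) (by norm_num))
    exact hH1 _ h1
  · intro k hk z hz
    have hfz := hF2 k hk z hz
    have h1 : f z ∈ Bset 1 := by
      left; left
      simp only [Set.mem_setOf_eq]
      have e : ((4:ℂ)*(1:ℕ)+2) = 6 := by norm_num
      rw [e]; linarith
    have h2 := hH5 1 le_rfl _ h1
    have e : ((4:ℂ)*(1:ℕ)+6) = 10 := by norm_num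
    rwa [e] at h2
  · intro k hk z hz
    have hfz := hF3 k hk z hz
    have h1 : f z ∈ Bset (k+1) := by
      left; left
      simp only [Set.mem_setOf_eq]
      have e : ((4:ℂ)*(↑(k+1))+2) = 4*(k:ℂ)+6 := by push_cast; ring
      rw [e]; linarith
    have h2 := hH5 (k+1) (by omega) _ h1
    have e : ((4:ℂ)*(↑(k+1))+6) = 4*(k:ℂ)+10 := by push_cast; ring
    rwa [e] at h2
end
end

section
/- Let g and h be entire functions satisfying conditions (G) and (H) respectively. Then the composite g∘h satisfies: |(g∘h)(z) - 2| < 1/2 for all z ∈ E_0; |(g∘h)(z) + 14| < 1/2 for all z ∈ G_1; |(g∘h)(z) + 10| < 1/2 for all z ∈ G_2; |(g∘h)(z) + 6| < 1/2 for all z ∈ G_3; |(g∘h)(z) - (4k-10)| < 1/2 for all z ∈ G_k for every k >= 4; and |(g∘h)(z) + (4k+10)| < 1/2 for all z ∈ B_k for every k >= 1. -/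
open Complex Metric

noncomputable section

lemma memG (m : ℕ) (w : ℂ) (hw : ‖w - (4*(m:ℂ)+2)‖ ≤ 1) : w ∈ Gset m :=
  Or.inl (Or.inl hw)

lemma memB (m : ℕ) (w : ℂ) (hw : ‖w + (4*(m:ℂ)+2)‖ ≤ 1) : w ∈ Bset m :=
  Or.inl (Or.inl hw)

lemma memE0 (w : ℂ) (hw : ‖w - 2‖ ≤ 1) : w ∈ E0 := Or.inl hw

theorem comp_gh (g h : ℂ → ℂ) (hg : Differentiable ℂ g) (hh : Differentiable ℂ h)
    (hG : CondG g) (hH : CondH h) :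
    (∀ z ∈ E0, ‖(g ∘ h) z - 2‖ < 1/2) ∧
    (∀ z ∈ Gset 1, ‖(g ∘ h) z + 14‖ < 1/2) ∧
    (∀ z ∈ Gset 2, ‖(g ∘ h) z + 10‖ < 1/2) ∧
    (∀ z ∈ Gset 3, ‖(g ∘ h) z + 6‖ < 1/2) ∧
    (∀ k : ℕ, 4 ≤ k → ∀ z ∈ Gset k, ‖(g ∘ h) z - (4*(k:ℂ)-10)‖ < 1/2) ∧
    (∀ k : ℕ, 1 ≤ k → ∀ z ∈ Bset k, ‖(g ∘ h) z + (4*(k:ℂ)+10)‖ < 1/2) := by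
  obtain ⟨hG0, hG1, hGk, hGB⟩ := hG
  obtain ⟨hH0, hH1, hH2, hHk, hHB⟩ := hH
  refine ⟨?_, ?_, ?_, ?_, ?_, ?_⟩
  · intro z hz
    exact hG0 _ (memE0 _ (le_of_lt (lt_trans (hH0 z hz) (by norm_num))))
  · intro z hz
    have h1 : h z ∈ Bset 2 := memB 2 _ (by
      have := hH1 z hz
      push_cast
      calc ‖h z + (4*2+2)‖ = ‖h z + 10‖ := by norm_num
        _ ≤ 1 := le_of_lt (lt_trans this (by norm_num)))
    calc ‖(g ∘ h) z + 14‖ = ‖g (h z) + (4*(2:ℕ)+6)‖ := by norm_num [Function.comp]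
      _ < 1/2 := hGB 2 (by norm_num) _ h1
  · intro z hz
    have h1 : h z ∈ Bset 1 := memB 1 _ (by
      have := hH2 z hz
      calc ‖h z + (4*(1:ℕ)+2)‖ = ‖h z + 6‖ := by norm_num
        _ ≤ 1 := le_of_lt (lt_trans this (by norm_num)))
    have := hGB 1 (le_refl 1) _ h1
    calc ‖(g ∘ h) z + 10‖ = ‖g (h z) + (4*(1:ℕ)+6)‖ := by norm_num [Function.comp]
      _ < 1/2 := this
  · intro z hz
    have h1 : h z ∈ Gset 1 := memG 1 _ (by
      have := hHk 3 (le_refl 3) z hz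
      calc ‖h z - (4*(1:ℕ)+2)‖ = ‖h z - (4*(3:ℕ)-6)‖ := by norm_num
        _ ≤ 1 := le_of_lt (lt_trans this (by norm_num)))
    exact hG1 _ h1
  · intro k hk z hz
    have h1 : h z ∈ Gset (k-2) := memG (k-2) _ (by
      have := hHk k (by omega) z hz
      have e : (4*((k-2:ℕ):ℂ)+2) = 4*(k:ℂ)-6 := by
        have : ((k-2:ℕ):ℂ) = (k:ℂ) - 2 := by push_cast [Nat.cast_sub (by omega : 2 ≤ k)]; ring
        rw [this]; ring
      rw [e]
      exact le_of_lt (lt_trans this (by norm_num)))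
    have := hGk (k-2) (by omega) _ h1
    have e : (4*((k-2:ℕ):ℂ)-2) = 4*(k:ℂ)-10 := by
      have : ((k-2:ℕ):ℂ) = (k:ℂ) - 2 := by push_cast [Nat.cast_sub (by omega : 2 ≤ k)]; ring
      rw [this]; ring
    rw [e] at this
    exact this
  · intro k hk z hz
    have h1 : h z ∈ Bset (k+1) := memB (k+1) _ (by
      have := hHB k hk z hz
      have e : (4*((k+1:ℕ):ℂ)+2) = 4*(k:ℂ)+6 := by push_cast; ring
      rw [e]
      exact le_of_lt (lt_trans this (by norm_num)))
    have := hGB (k+1) (by omega) _ h1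
    have e : (4*((k+1:ℕ):ℂ)+6) = 4*(k:ℂ)+10 := by push_cast; ring
    rw [e] at this
    exact this
end
end

section
/- Let g and h be entire functions satisfying conditions (G) and (H) respectively. Then the composite h∘g satisfies: |(h∘g)(z) - 2| < 1/2 for all z ∈ E_0; |(h∘g)(z) + 10| < 1/2 for all z ∈ G_1 and all z ∈ G_2; |(h∘g)(z) + 6| < 1/2 for all z ∈ G_3; |(h∘g)(z) - (4k-10)| < 1/2 for all z ∈ G_k for every k >= 4; and |(h∘g)(z) + (4k+10)| < 1/2 for all z ∈ B_k for every k >= 1. -/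
open Complex Metric

noncomputable section

theorem comp_hg (g h : ℂ → ℂ) (hg : Differentiable ℂ g) (hh : Differentiable ℂ h)
    (hG : CondG g) (hH : CondH h) :
    (∀ z ∈ E0, ‖(h ∘ g) z - 2‖ < 1/2) ∧
    (∀ z ∈ Gset 1, ‖(h ∘ g) z + 10‖ < 1/2) ∧
    (∀ z ∈ Gset 2, ‖(h ∘ g) z + 10‖ < 1/2) ∧
    (∀ z ∈ Gset 3, ‖(h ∘ g) z + 6‖ < 1/2) ∧
    (∀ k : ℕ, 4 ≤ k → ∀ z ∈ Gset k, ‖(h ∘ g) z - (4*(k:ℂ)-10)‖ < 1/2) ∧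
    (∀ k : ℕ, 1 ≤ k → ∀ z ∈ Bset k, ‖(h ∘ g) z + (4*(k:ℂ)+10)‖ < 1/2) := by
  obtain ⟨gE, gG1, gGk, gBk⟩ := hG
  obtain ⟨hE, hG1, hG2, hGk, hBk⟩ := hH
  have memG : ∀ (k : ℕ) (w : ℂ), ‖w - (4*(k:ℂ)+2)‖ ≤ 1 → w ∈ Gset k := by
    intro k w hw
    simp only [Gset, Set.mem_union, Set.mem_setOf_eq]
    exact Or.inl (Or.inl hw)
  have memB : ∀ (k : ℕ) (w : ℂ), ‖w + (4*(k:ℂ)+2)‖ ≤ 1 → w ∈ Bset k := by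
    intro k w hw
    simp only [Bset, Set.mem_union, Set.mem_setOf_eq]
    exact Or.inl (Or.inl hw)
  have memE : ∀ (w : ℂ), ‖w - 2‖ ≤ 1 → w ∈ E0 := by
    intro w hw
    simp only [E0, G0, Set.mem_union, Set.mem_setOf_eq]
    exact Or.inl hw
  refine ⟨?_, ?_, ?_, ?_, ?_, ?_⟩
  · intro z hz
    exact hE (g z) (memE _ ((gE z hz).le.trans (by norm_num)))
  · intro z hz
    have h2 := gG1 z hz
    have h1 : g z ∈ Bset 1 := by
      apply memB
      push_cast
      calc ‖g z + (4*1+2)‖ = ‖g z + 6‖ := by norm_num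
        _ ≤ 1 := by linarith
    have h3 := hBk 1 le_rfl (g z) h1
    rw [show (4*((1:ℕ):ℂ)+6) = 10 by norm_num] at h3
    simpa using h3
  · intro z hz
    have h2 := gGk 2 le_rfl z hz
    have h6 : ‖g z - 6‖ < 1/2 := by
      have : (4*((2:ℕ):ℂ)-2) = 6 := by norm_num
      rwa [this] at h2
    have h1 : g z ∈ Gset 1 := by
      apply memG
      have : (4*((1:ℕ):ℂ)+2) = 6 := by norm_num
      rw [this]
      linarith
    simpa using hG1 (g z) h1
  · intro z hz
    have h2 := gGk 3 (by norm_num) z hz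
    have h6 : ‖g z - 10‖ < 1/2 := by
      have : (4*((3:ℕ):ℂ)-2) = 10 := by norm_num
      rwa [this] at h2
    have h1 : g z ∈ Gset 2 := by
      apply memG
      have : (4*((2:ℕ):ℂ)+2) = 10 := by norm_num
      rw [this]
      linarith
    simpa using hG2 (g z) h1
  · intro k hk z hz
    have h2 := gGk k (by omega) z hz
    have hk1 : ((k-1:ℕ):ℂ) = (k:ℂ)-1 := by
      push_cast [Nat.cast_sub (by omega : 1 ≤ k)]
      ring
    have h1 : g z ∈ Gset (k-1) := by
      apply memG
      rw [hk1, show (4:ℂ)*((k:ℂ)-1)+2 = 4*(k:ℂ)-2 by ring]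
      linarith
    have h3 := hGk (k-1) (by omega) (g z) h1
    rw [hk1, show (4:ℂ)*((k:ℂ)-1)-6 = 4*(k:ℂ)-10 by ring] at h3
    simpa using h3
  · intro k hk z hz
    have h2 := gBk k hk z hz
    have h1 : g z ∈ Bset (k+1) := by
      apply memB
      rw [show (4*((k+1:ℕ):ℂ)+2) = 4*(k:ℂ)+6 by push_cast; ring]
      linarith
    have h3 := hBk (k+1) (by omega) (g z) h1
    rw [show (4*((k+1:ℕ):ℂ)+6) = 4*(k:ℂ)+10 by push_cast; ring] at h3
    simpa using h3
end
end

section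
/- Let f, g, h be entire functions satisfying conditions (F), (G), (H) respectively. Then the composite f∘g∘h satisfies: |(f∘g∘h)(z) - 2| < 1/2 for all z ∈ E_0; |(f∘g∘h)(z) + 18| < 1/2 for all z ∈ G_1; |(f∘g∘h)(z) + 14| < 1/2 for all z ∈ G_2; |(f∘g∘h)(z) + 10| < 1/2 for all z ∈ G_3; |(f∘g∘h)(z) + 6| < 1/2 for all z ∈ G_k for every k >= 4; and |(f∘g∘h)(z) + (4k+14)| < 1/2 for all z ∈ B_k for every k >= 1. -/
open Complex Metric

noncomputable section

lemma mem_Gset_of (k : ℕ) (w : ℂ) (hw : ‖w - (4*(k:ℂ)+2)‖ < 1/2) :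
    w ∈ Gset k := by
  left; left
  exact le_of_lt (hw.trans_le (by norm_num))

lemma mem_Bset_of (k : ℕ) (w : ℂ) (hw : ‖w + (4*(k:ℂ)+2)‖ < 1/2) :
    w ∈ Bset k := by
  left; left
  exact le_of_lt (hw.trans_le (by norm_num))

lemma mem_E0_of (w : ℂ) (hw : ‖w - 2‖ < 1/2) : w ∈ E0 := by
  left
  exact le_of_lt (hw.trans_le (by norm_num))

theorem comp_fgh (f g h : ℂ → ℂ)
    (hf : Differentiable ℂ f) (hg : Differentiable ℂ g) (hh : Differentiable ℂ h)
    (hF : CondF f) (hG : CondG g) (hH : CondH h) :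
    (∀ z ∈ E0, ‖(f ∘ g ∘ h) z - 2‖ < 1/2) ∧
    (∀ z ∈ Gset 1, ‖(f ∘ g ∘ h) z + 18‖ < 1/2) ∧
    (∀ z ∈ Gset 2, ‖(f ∘ g ∘ h) z + 14‖ < 1/2) ∧
    (∀ z ∈ Gset 3, ‖(f ∘ g ∘ h) z + 10‖ < 1/2) ∧
    (∀ k : ℕ, 4 ≤ k → ∀ z ∈ Gset k, ‖(f ∘ g ∘ h) z + 6‖ < 1/2) ∧
    (∀ k : ℕ, 1 ≤ k → ∀ z ∈ Bset k, ‖(f ∘ g ∘ h) z + (4*(k:ℂ)+14)‖ < 1/2) := by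
  obtain ⟨hF1, hF2, hF3⟩ := hF
  obtain ⟨hG1, hG2, hG3, hG4⟩ := hG
  obtain ⟨hH1, hH2, hH3, hH4, hH5⟩ := hH
  refine ⟨?_, ?_, ?_, ?_, ?_, ?_⟩
  · intro z hz
    exact hF1 _ (mem_E0_of _ (hG1 _ (mem_E0_of _ (hH1 _ hz))))
  · intro z hz
    have h1 : h z ∈ Bset 2 := mem_Bset_of 2 _ (by
      have := hH2 z hz; rw [show ((4:ℂ)*(2:ℕ)+2) = 10 by norm_num]; exact this)
    have h2 : g (h z) ∈ Bset 3 := mem_Bset_of 3 _ (by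
      have := hG4 2 (by norm_num) _ h1
      rw [show ((4:ℂ)*(3:ℕ)+2) = (4*(2:ℕ)+6) by norm_num]; exact this)
    have := hF3 3 (by norm_num) _ h2
    rw [show ((4:ℂ)*(3:ℕ)+6) = 18 by norm_num] at this; exact this
  · intro z hz
    have h1 : h z ∈ Bset 1 := mem_Bset_of 1 _ (by
      have := hH3 z hz; rw [show ((4:ℂ)*(1:ℕ)+2) = 6 by norm_num]; exact this)
    have h2 : g (h z) ∈ Bset 2 := mem_Bset_of 2 _ (by
      have := hG4 1 le_rfl _ h1
      rw [show ((4:ℂ)*(2:ℕ)+2) = (4*(1:ℕ)+6) by norm_num]; exact this)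
    have := hF3 2 (by norm_num) _ h2
    rw [show ((4:ℂ)*(2:ℕ)+6) = 14 by norm_num] at this; exact this
  · intro z hz
    have h1 : h z ∈ Gset 1 := mem_Gset_of 1 _ (by
      have := hH4 3 le_rfl _ hz
      rw [show ((4:ℂ)*(1:ℕ)+2) = (4*(3:ℕ)-6) by norm_num]
      simpa using this)
    have h2 : g (h z) ∈ Bset 1 := mem_Bset_of 1 _ (by
      have := hG2 _ h1
      rw [show ((4:ℂ)*(1:ℕ)+2) = 6 by norm_num]; exact this)
    have := hF3 1 le_rfl _ h2
    rw [show ((4:ℂ)*(1:ℕ)+6) = 10 by norm_num] at this; exact this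
  · intro k hk z hz
    have h1 : h z ∈ Gset (k-2) := mem_Gset_of (k-2) _ (by
      have := hH4 k (by omega) _ hz
      have e : ((4:ℂ)*((k-2:ℕ):ℂ)+2) = (4*(k:ℂ)-6) := by
        have : ((k-2:ℕ):ℂ) = (k:ℂ) - 2 := by
          push_cast [Nat.cast_sub (by omega : 2 ≤ k)]; ring
        rw [this]; ring
      rw [e]; exact this)
    have h2 : g (h z) ∈ Gset (k-3) := mem_Gset_of (k-3) _ (by
      have := hG3 (k-2) (by omega) _ h1
      have e : ((4:ℂ)*((k-3:ℕ):ℂ)+2) = (4*((k-2:ℕ):ℂ)-2) := by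
        have e1 : ((k-2:ℕ):ℂ) = (k:ℂ) - 2 := by
          push_cast [Nat.cast_sub (by omega : 2 ≤ k)]; ring
        have e2 : ((k-3:ℕ):ℂ) = (k:ℂ) - 3 := by
          push_cast [Nat.cast_sub (by omega : 3 ≤ k)]; ring
        rw [e1, e2]; ring
      rw [e]; exact this)
    exact hF2 (k-3) (by omega) _ h2
  · intro k hk z hz
    have h1 : h z ∈ Bset (k+1) := mem_Bset_of (k+1) _ (by
      have := hH5 k hk _ hz
      have e : ((4:ℂ)*((k+1:ℕ):ℂ)+2) = (4*(k:ℂ)+6) := by push_cast; ring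
      rw [e]; exact this)
    have h2 : g (h z) ∈ Bset (k+2) := mem_Bset_of (k+2) _ (by
      have := hG4 (k+1) (by omega) _ h1
      have e : ((4:ℂ)*((k+2:ℕ):ℂ)+2) = (4*((k+1:ℕ):ℂ)+6) := by push_cast; ring
      rw [e]; exact this)
    have := hF3 (k+2) (by omega) _ h2
    have e : ((4:ℂ)*((k+2:ℕ):ℂ)+6) = (4*(k:ℂ)+14) := by push_cast; ring
    rw [e] at this; exact this
end
end

section
/- Let f, g, h be entire functions satisfying conditions (F), (G), (H) respectively. Then the composite g∘h∘f satisfies: |(g∘h∘f)(z) - 2| < 1/2 for all z ∈ E_0; |(g∘h∘f)(z) + 14| < 1/2 for all z ∈ G_k for every k >= 1; and |(g∘h∘f)(z) + (4k+14)| < 1/2 for all z ∈ B_k for every k >= 1. -/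
open Complex Metric

noncomputable section

theorem comp_ghf (f g h : ℂ → ℂ)
    (hf : Differentiable ℂ f) (hg : Differentiable ℂ g) (hh : Differentiable ℂ h)
    (hF : CondF f) (hG : CondG g) (hH : CondH h) :
    (∀ z ∈ E0, ‖(g ∘ h ∘ f) z - 2‖ < 1/2) ∧
    (∀ k : ℕ, 1 ≤ k → ∀ z ∈ Gset k, ‖(g ∘ h ∘ f) z + 14‖ < 1/2) ∧
    (∀ k : ℕ, 1 ≤ k → ∀ z ∈ Bset k, ‖(g ∘ h ∘ f) z + (4*(k:ℂ)+14)‖ < 1/2) := by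
  obtain ⟨hF1, hF2, hF3⟩ := hF
  obtain ⟨hG1, hG2, hG3, hG4⟩ := hG
  obtain ⟨hH1, hH2, hH3, hH4, hH5⟩ := hH
  have hE : ∀ w : ℂ, ‖w - 2‖ < 1/2 → w ∈ E0 := by
    intro w hw
    exact Or.inl (le_of_lt (lt_trans hw (by norm_num)))
  have hB : ∀ (m : ℕ) (w : ℂ), ‖w + (4*(m:ℂ)+2)‖ < 1/2 → w ∈ Bset m := by
    intro m w hw
    exact Or.inl (Or.inl (le_of_lt (lt_trans hw (by norm_num))))
  refine ⟨?_, ?_, ?_⟩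
  · intro z hz
    exact hG1 _ (hE _ (hH1 _ (hE _ (hF1 _ hz))))
  · intro k hk z hz
    have h1 : f z ∈ Bset 1 := hB 1 (f z) (by
      have := hF2 k hk z hz
      convert this using 2
      push_cast; ring)
    have h2 : h (f z) ∈ Bset 2 := hB 2 _ (by
      have := hH5 1 le_rfl _ h1
      convert this using 2
      push_cast; ring)
    have := hG4 2 (by norm_num) _ h2
    simp only [Function.comp_apply]
    convert this using 2
    push_cast; ring
  · intro k hk z hz
    have h1 : f z ∈ Bset (k+1) := hB (k+1) _ (by
      have := hF3 k hk z hz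
      convert this using 2
      push_cast; ring)
    have h2 : h (f z) ∈ Bset (k+2) := hB (k+2) _ (by
      have := hH5 (k+1) (by omega) _ h1
      convert this using 2
      push_cast; ring)
    have := hG4 (k+2) (by omega) _ h2
    simp only [Function.comp_apply]
    convert this using 2
    push_cast; ring
end
end
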